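/- Let d ≥ 1 be an integer, 0 < μ ≤ L, and let f : ℝ^d → ℝ be measurable with a point x* ∈ ℝ^d such that f(x*) + (μ/2)‖x − x*‖² ≤ f(x) ≤ f(x*) + (L/2)‖x − x*‖² for all x ∈ ℝ^d, and 0 < Z := ∫_{ℝ^d} e^{-f(x)} dx < ∞. Let ρ(x) = e^{-f(x)}/Z and let ρ₀(x) = (L/(2π))^{d/2} e^{-L‖x − x*‖²/2} be the density of the Gaussian N(x*, L^{-1} I_d). Then ρ₀(x) ≤ (L/μ)^{d/2} ρ(x) for all x ∈ ℝ^d; that is, the Gaussian initial distribution N(x*, L^{-1} I_d) is a κ^{d/2}-warm start of ρ, where κ = L/μ. -/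

import Mathlib

open MeasureTheory Real

lemma aux_integrable_rexp_neg_mul_sq_norm {d : ℕ} {b : ℝ} (hb : 0 < b) :
    Integrable (fun x : EuclideanSpace ℝ (Fin d) => Real.exp (-b * ‖x‖ ^ 2)) := by
  have h := (GaussianFourier.integrable_cexp_neg_mul_sq_norm_add (V := EuclideanSpace ℝ (Fin d))
    (b := (b : ℂ)) (by simpa using hb) 0 0).norm
  convert h using 2 with x
  rw [Complex.norm_exp]
  norm_num
  left
  norm_cast

/-- The Gaussian `N(x*, L⁻¹ I_d)` is a `(L/μ)^{d/2}`-warm start of `ρ = e^{-f}/Z` when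
`f(x*) + (μ/2)‖x − x*‖² ≤ f(x) ≤ f(x*) + (L/2)‖x − x*‖²` for all `x`. -/
theorem stmt_13 (d : ℕ) (hd : 1 ≤ d) (μ L : ℝ) (hμ : 0 < μ) (hμL : μ ≤ L)
    (f : EuclideanSpace ℝ (Fin d) → ℝ) (hf : Measurable f)
    (xstar : EuclideanSpace ℝ (Fin d))
    (hlow : ∀ x, f xstar + μ / 2 * ‖x - xstar‖ ^ 2 ≤ f x)
    (hup : ∀ x, f x ≤ f xstar + L / 2 * ‖x - xstar‖ ^ 2)
    (Z : ℝ) (hZ : Z = ∫ x, Real.exp (-f x))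
    (hint : Integrable fun x : EuclideanSpace ℝ (Fin d) => Real.exp (-f x))
    (hZpos : 0 < Z)
    (ρ ρ₀ : EuclideanSpace ℝ (Fin d) → ℝ)
    (hρ : ∀ x, ρ x = Real.exp (-f x) / Z)
    (hρ₀ : ∀ x, ρ₀ x = (L / (2 * π)) ^ ((d : ℝ) / 2) * Real.exp (-L * ‖x - xstar‖ ^ 2 / 2)) :
    ∀ x, ρ₀ x ≤ (L / μ) ^ ((d : ℝ) / 2) * ρ x := by
  have hL : 0 < L := lt_of_lt_of_le hμ hμL
  have hμ2 : 0 < μ / 2 := by positivity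
  set c : ℝ := (d : ℝ) / 2 with hc
  -- Gaussian integral bound for Z
  have hgauss : (∫ x : EuclideanSpace ℝ (Fin d),
      Real.exp (-(μ / 2) * ‖x - xstar‖ ^ 2)) = (π / (μ / 2)) ^ c := by
    have ht := integral_sub_right_eq_self (μ := volume)
      (fun x : EuclideanSpace ℝ (Fin d) => Real.exp (-(μ / 2) * ‖x‖ ^ 2)) xstar
    rw [ht, GaussianFourier.integral_rexp_neg_mul_sq_norm hμ2]
    simp [hc]
  have hintg : Integrable (fun x : EuclideanSpace ℝ (Fin d) =>
      Real.exp (-f xstar) * Real.exp (-(μ / 2) * ‖x - xstar‖ ^ 2)) := by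
    have : Integrable (fun x : EuclideanSpace ℝ (Fin d) =>
        Real.exp (-(μ / 2) * ‖x - xstar‖ ^ 2)) := by
      have := (aux_integrable_rexp_neg_mul_sq_norm (d := d) hμ2).comp_sub_right xstar
      exact this
    exact this.const_mul _
  have hZle : Z ≤ Real.exp (-f xstar) * (π / (μ / 2)) ^ c := by
    have h1 : Z ≤ ∫ x : EuclideanSpace ℝ (Fin d),
        Real.exp (-f xstar) * Real.exp (-(μ / 2) * ‖x - xstar‖ ^ 2) := by
      rw [hZ]
      refine integral_mono hint hintg fun x => ?_
      rw [← Real.exp_add]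
      exact Real.exp_le_exp.mpr (by nlinarith [hlow x])
    rwa [integral_const_mul, hgauss] at h1
  -- main pointwise bound
  intro x
  rw [hρ, hρ₀]
  have hcnn : (0:ℝ) ≤ c := by positivity
  have h2 : Real.exp (-L * ‖x - xstar‖ ^ 2 / 2) ≤ Real.exp (f xstar) * Real.exp (-f x) := by
    rw [← Real.exp_add]
    exact Real.exp_le_exp.mpr (by nlinarith [hup x])
  have hb1 : (0:ℝ) < L / (2 * π) := by positivity
  have key : (L / (2 * π)) ^ c * Real.exp (f xstar) * Z ≤ (L / μ) ^ c := by
    calc (L / (2 * π)) ^ c * Real.exp (f xstar) * Z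
        ≤ (L / (2 * π)) ^ c * Real.exp (f xstar) *
          (Real.exp (-f xstar) * (π / (μ / 2)) ^ c) := by
          apply mul_le_mul_of_nonneg_left hZle (by positivity)
      _ = (L / (2 * π)) ^ c * (π / (μ / 2)) ^ c := by
          rw [Real.exp_neg]
          field_simp
      _ = (L / μ) ^ c := by
          rw [← Real.mul_rpow hb1.le (by positivity)]
          congr 1
          field_simp
  have hstep : (L / (2 * π)) ^ c * Real.exp (-L * ‖x - xstar‖ ^ 2 / 2) ≤
      (L / (2 * π)) ^ c * (Real.exp (f xstar) * Real.exp (-f x)) :=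
    mul_le_mul_of_nonneg_left h2 (by positivity)
  refine hstep.trans ?_
  rw [← le_div_iff₀ hZpos] at key
  calc (L / (2 * π)) ^ c * (Real.exp (f xstar) * Real.exp (-f x))
      = (L / (2 * π)) ^ c * Real.exp (f xstar) * Real.exp (-f x) := by ring
    _ ≤ (L / μ) ^ c / Z * Real.exp (-f x) :=
        mul_le_mul_of_nonneg_right key (Real.exp_nonneg _)
    _ = (L / μ) ^ c * (Real.exp (-f x) / Z) := by ring
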